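/- arXiv:1210.8397 — 7 statements merged into one kernel-verified Lean document; each statement's English description precedes it below -/
import Mathlib

section
/- Let m = 2k with k ∈ ℕ and β ∈ (k+1, m+1]. Then the point k/(β-1) satisfies ((k-1)β + m - (k-1))/(β(β-1)) < k/(β-1) < (k+1)/β; in particular k/(β-1) lies in the k-th digit interval but in no other digit interval. -/
/-!
After clearing the positive denominators β(β - 1), β - 1 and β, both inequalities reduce to
β > k + 1; for the first one this uses m - k + 1 = k + 1, i.e. m = 2k.
-/

noncomputable section

-- The `i`-th digit interval is `[digitIntervalLeft β i, digitIntervalRight m β i]`.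
def digitIntervalLeft (β i : ℝ) : ℝ := i / β

def digitIntervalRight (m β i : ℝ) : ℝ := (i * β + m - i) / (β * (β - 1))

end

lemma digitIntervalRight_sub_one_lt_div {m β k : ℝ} (hβ : 1 < β) (hmk : m - k + 1 < β) :
    digitIntervalRight m β (k - 1) < k / (β - 1) := by
  have hβ1 : 0 < β - 1 := sub_pos.mpr hβ
  rw [digitIntervalRight, div_lt_div_iff₀ (by positivity) hβ1]
  nlinarith

lemma div_lt_digitIntervalLeft_add_one {β k : ℝ} (hβ : 1 < β) (hk : k + 1 < β) :
    k / (β - 1) < digitIntervalLeft β (k + 1) := by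
  rw [digitIntervalLeft, div_lt_div_iff₀ (sub_pos.mpr hβ) (by linarith)]
  linarith

theorem stmt_6_general (k : ℕ) (m : ℕ) (hm : m = 2 * k) (β : ℝ)
    (hβ1 : (k : ℝ) + 1 < β) :
    (((k : ℝ) - 1) * β + m - ((k : ℝ) - 1)) / (β * (β - 1)) < (k : ℝ) / (β - 1) ∧
      (k : ℝ) / (β - 1) < ((k : ℝ) + 1) / β := by
  have hβ : 1 < β := by linarith [(Nat.cast_nonneg k : (0 : ℝ) ≤ k)]
  have hmk : (m : ℝ) - k + 1 < β := by
    rw [hm, Nat.cast_mul, Nat.cast_ofNat]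
    linarith
  exact ⟨digitIntervalRight_sub_one_lt_div hβ hmk, div_lt_digitIntervalLeft_add_one hβ hβ1⟩

theorem stmt_6 (k : ℕ) (m : ℕ) (hm : m = 2 * k) (β : ℝ)
    (hβ1 : (k : ℝ) + 1 < β) (hβ2 : β ≤ m + 1) :
    (((k : ℝ) - 1) * β + m - ((k : ℝ) - 1)) / (β * (β - 1)) < (k : ℝ) / (β - 1) ∧
      (k : ℝ) / (β - 1) < ((k : ℝ) + 1) / β :=
  stmt_6_general k m hm β hβ1
end

section
/- Let m = 2k with k ≥ 1 and β ∈ (k+1, m+1]. Then the constant sequence (ε_i) with ε_i = k for all i is the unique sequence in {0,...,m}^ℕ satisfying Σ ε_i β^{-i} = k/(β-1). -/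
/-!
Put `d i = ε i - k`, an integer in `[-k, k]`. The equation says `∑ d i β^{-(i+1)} = 0`.
Peeling off the first term, `d 0 = -∑ d (i+1) β^{-(i+1)}`, whose modulus is at most
`k / (β - 1) < 1` because `β > k + 1`; hence the integer `d 0` vanishes, the tail sum vanishes
too, and induction gives `d = 0`.
-/

section DigitExpansion

variable {β : ℝ}

lemma hasSum_div_pow_succ (hβ : 1 < β) (c : ℝ) :
    HasSum (fun i : ℕ => c / β ^ (i + 1)) (c / (β - 1)) := by
  have hβ0 : 0 < β := by linarith
  have hgeom := (hasSum_geometric_of_lt_one (inv_nonneg.2 hβ0.le)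
    (inv_lt_one_of_one_lt₀ hβ)).mul_left (c / β)
  have hterm : (fun i : ℕ => c / β ^ (i + 1)) = fun i => c / β * β⁻¹ ^ i := by
    funext i; rw [pow_succ, inv_pow]; field_simp
  have hsum : c / (β - 1) = c / β * (1 - β⁻¹)⁻¹ := by
    have : β - 1 ≠ 0 := by linarith
    field_simp
  rwa [hterm, hsum]

lemma norm_div_pow_le (hβ : 0 < β) {x c : ℝ} (hx : |x| ≤ c) (n : ℕ) :
    ‖x / β ^ n‖ ≤ c / β ^ n := by
  rw [Real.norm_eq_abs, abs_div, abs_of_pos (pow_pos hβ n)]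
  exact div_le_div_of_nonneg_right hx (by positivity)

lemma summable_div_pow_succ (hβ : 1 < β) {d : ℕ → ℝ} {c : ℝ} (hd : ∀ i, |d i| ≤ c) :
    Summable fun i : ℕ => d i / β ^ (i + 1) :=
  (hasSum_div_pow_succ hβ c).summable.of_norm_bounded fun i =>
    norm_div_pow_le (by linarith) (hd i) (i + 1)

lemma abs_tsum_div_pow_succ_le (hβ : 1 < β) {d : ℕ → ℝ} {c : ℝ} (hd : ∀ i, |d i| ≤ c) :
    |∑' i : ℕ, d i / β ^ (i + 1)| ≤ c / (β - 1) :=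
  tsum_of_norm_bounded (hasSum_div_pow_succ hβ c) fun i =>
    norm_div_pow_le (by linarith) (hd i) (i + 1)

lemma tsum_div_pow_succ_eq_head_add_tail (hβ : 1 < β) {d : ℕ → ℝ} {c : ℝ}
    (hd : ∀ i, |d i| ≤ c) :
    ∑' i : ℕ, d i / β ^ (i + 1) = (d 0 + ∑' i : ℕ, d (i + 1) / β ^ (i + 1)) / β := by
  rw [(summable_div_pow_succ hβ hd).tsum_eq_zero_add, add_div, ← tsum_div_const]
  congr 1
  · ring
  · congr 1; ext i; rw [pow_succ _ (i + 1), div_div]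

lemma head_eq_zero_and_tail_eq_zero {d : ℕ → ℤ} {c : ℝ} (hβ : c + 1 < β)
    (hd : ∀ i, |(d i : ℝ)| ≤ c) (hsum : ∑' i : ℕ, (d i : ℝ) / β ^ (i + 1) = 0) :
    d 0 = 0 ∧ ∑' i : ℕ, (d (i + 1) : ℝ) / β ^ (i + 1) = 0 := by
  have hc : 0 ≤ c := (abs_nonneg _).trans (hd 0)
  have hβ1 : 1 < β := by linarith
  have hsplit := tsum_div_pow_succ_eq_head_add_tail hβ1 hd
  rw [hsum, eq_comm, div_eq_zero_iff, or_iff_left (by positivity), add_eq_zero_iff_eq_neg]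
    at hsplit
  have htail : |∑' i : ℕ, (d (i + 1) : ℝ) / β ^ (i + 1)| < 1 := by
    refine (abs_tsum_div_pow_succ_le hβ1 fun i => hd (i + 1)).trans_lt ?_
    rw [div_lt_one (by linarith)]
    linarith
  have hhead : d 0 = 0 := by
    rw [← Int.abs_lt_one_iff, ← Int.cast_lt (R := ℝ), Int.cast_abs, hsplit, abs_neg]
    exact_mod_cast htail
  refine ⟨hhead, ?_⟩
  rw [hhead, Int.cast_zero, eq_comm, neg_eq_zero] at hsplit
  exact hsplit

theorem eq_zero_of_tsum_div_pow_succ_eq_zero {d : ℕ → ℤ} {c : ℝ} (hβ : c + 1 < β)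
    (hd : ∀ i, |(d i : ℝ)| ≤ c) (hsum : ∑' i : ℕ, (d i : ℝ) / β ^ (i + 1) = 0) (n : ℕ) :
    d n = 0 := by
  induction n generalizing d with
  | zero => exact (head_eq_zero_and_tail_eq_zero hβ hd hsum).1
  | succ n ih =>
    exact ih (fun i => hd (i + 1)) (head_eq_zero_and_tail_eq_zero hβ hd hsum).2

end DigitExpansion

theorem stmt_7_general (k : ℕ) (m : ℕ) (hm : m = 2 * k) (β : ℝ)
    (hβ1 : (k : ℝ) + 1 < β)
    (ε : ℕ → ℕ) (hε : ∀ i, ε i ≤ m) :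
    (∑' i : ℕ, (ε i : ℝ) / β ^ (i + 1)) = (k : ℝ) / (β - 1) ↔ ∀ i, ε i = k := by
  have hβ : 1 < β := by linarith [k.cast_nonneg (α := ℝ)]
  have hgeom := hasSum_div_pow_succ hβ k
  refine ⟨fun hsum i => ?_, fun h => by simpa only [h] using hgeom.tsum_eq⟩
  have hε_abs : ∀ i, |(ε i : ℝ)| ≤ m := fun i => by
    rw [abs_of_nonneg (by positivity)]
    exact_mod_cast hε i
  have hdigit : ∀ i, |(((ε i : ℤ) - k : ℤ) : ℝ)| ≤ k := fun i => by
    have : (ε i : ℝ) ≤ 2 * k := by exact_mod_cast hm ▸ hε i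
    push_cast
    rw [abs_le]
    constructor <;> linarith [(ε i).cast_nonneg (α := ℝ)]
  have hzero : ∑' i : ℕ, (((ε i : ℤ) - k : ℤ) : ℝ) / β ^ (i + 1) = 0 := by
    push_cast
    simp_rw [sub_div]
    rw [(summable_div_pow_succ hβ hε_abs).tsum_sub hgeom.summable, hsum, hgeom.tsum_eq, sub_self]
  have := eq_zero_of_tsum_div_pow_succ_eq_zero hβ1 hdigit hzero i
  omega

theorem stmt_7 (k : ℕ) (hk : 1 ≤ k) (m : ℕ) (hm : m = 2 * k) (β : ℝ)
    (hβ1 : (k : ℝ) + 1 < β) (hβ2 : β ≤ m + 1)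
    (ε : ℕ → ℕ) (hε : ∀ i, ε i ≤ m) :
    (∑' i : ℕ, (ε i : ℝ) / β ^ (i + 1)) = (k : ℝ) / (β - 1) ↔ ∀ i, ε i = k :=
  stmt_7_general k m hm β hβ1 ε hε
end

section
/- Let m = 2k+1 with k ∈ ℕ. For real β with (2k+3)/2 ≤ β < (k+1+√(k²+6k+5))/2 and i ∈ {1,...,k}, if x lies in the i-th fixed digit interval [((i-1)β+m-(i-1))/(β(β-1)), (i+1)/β], then βx - i < (kβ + m - k)/(β(β-1)). -/
/-!
Since `x ≤ (i + 1) / β`, the left-hand side `β x - i` is at most `1`. The upper bound on `β` says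
exactly that `β` lies below the larger root of `β² - (k + 1) β - (k + 1)`, so
`β (β - 1) < k β + k + 1 = k β + m - k`, i.e. the right-hand side exceeds `1`.
-/

lemma sq_sub_mul_sub_neg_of_lt_root {c β : ℝ} (hvertex : c / 2 ≤ β)
    (hroot : β < (c + √(c ^ 2 + 4 * c)) / 2) : β ^ 2 - c * β - c < 0 := by
  have hlt : 2 * β - c < √(c ^ 2 + 4 * c) := by linarith
  rw [Real.lt_sqrt (by linarith)] at hlt
  nlinarith

theorem stmt_9_general (k : ℕ) (m : ℕ) (hm : m = 2 * k + 1) (β : ℝ)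
    (hβ1 : (2 * (k : ℝ) + 3) / 2 ≤ β)
    (hβ2 : β < ((k : ℝ) + 1 + Real.sqrt ((k : ℝ) ^ 2 + 6 * k + 5)) / 2)
    (i : ℕ) (x : ℝ)
    (hx : x ∈ Set.Icc ((((i : ℝ) - 1) * β + m - ((i : ℝ) - 1)) / (β * (β - 1)))
      (((i : ℝ) + 1) / β)) :
    β * x - i < ((k : ℝ) * β + m - k) / (β * (β - 1)) := by
  have hk : (0 : ℝ) ≤ k := k.cast_nonneg
  have hmk : (m : ℝ) = 2 * k + 1 := by rw [hm]; push_cast; ring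
  have hβ : 1 < β := by linarith
  have hquad : β ^ 2 - (k + 1) * β - (k + 1) < 0 := by
    refine sq_sub_mul_sub_neg_of_lt_root (by linarith) ?_
    convert hβ2 using 4
    ring
  have hβx : β * x ≤ i + 1 := (le_div_iff₀' (by linarith)).mp hx.2
  have hrhs : 1 < ((k : ℝ) * β + m - k) / (β * (β - 1)) := by
    rw [one_lt_div (by nlinarith), hmk]
    nlinarith
  linarith

theorem stmt_9 (k : ℕ) (m : ℕ) (hm : m = 2 * k + 1) (β : ℝ)
    (hβ1 : (2 * (k : ℝ) + 3) / 2 ≤ β)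
    (hβ2 : β < ((k : ℝ) + 1 + Real.sqrt ((k : ℝ) ^ 2 + 6 * k + 5)) / 2)
    (i : ℕ) (hi1 : 1 ≤ i) (hi2 : i ≤ k) (x : ℝ)
    (hx : x ∈ Set.Icc ((((i : ℝ) - 1) * β + m - ((i : ℝ) - 1)) / (β * (β - 1)))
      (((i : ℝ) + 1) / β)) :
    β * x - i < ((k : ℝ) * β + m - k) / (β * (β - 1)) :=
  stmt_9_general k m hm β hβ1 hβ2 i x hx
end

section
/- Let m = 2k+1 with k ∈ ℕ and β ∈ ((k+1+√(k²+6k+5))/2, m+1]. Then (kβ + (m-k))/(β(β-1)) < ((k+1)β + k)/(β²-1) < (k+2)/β. -/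
/-!
Since k² + 6k + 5 = (k+1)² + 4(k+1), the lower bound on β says that β lies beyond the larger root
of x² − (k+1)x − (k+1), i.e. β² − (k+1)β − (k+1) > 0. After clearing the (positive) denominators,
the first inequality is this quadratic times β − 1, and the second is the quadratic plus β − 1.
-/

lemma lt_and_quadratic_pos_of_larger_root_lt {a β : ℝ} (ha : 0 ≤ a)
    (h : (a + √(a ^ 2 + 4 * a)) / 2 < β) : a < β ∧ 0 < β ^ 2 - a * β - a := by
  have hs : √(a ^ 2 + 4 * a) ^ 2 = a ^ 2 + 4 * a := Real.sq_sqrt (by positivity)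
  have has : a ≤ √(a ^ 2 + 4 * a) := Real.le_sqrt_of_sq_le (by linarith)
  constructor <;> nlinarith

lemma div_lt_div_of_quadratic_pos_left {k β : ℝ} (hβ : 1 < β)
    (hq : 0 < β ^ 2 - (k + 1) * β - (k + 1)) :
    (k * β + (k + 1)) / (β * (β - 1)) < ((k + 1) * β + k) / (β ^ 2 - 1) := by
  rw [div_lt_div_iff₀ (by nlinarith) (by nlinarith)]
  nlinarith [mul_pos (sub_pos.2 hβ) hq]

lemma div_lt_div_of_quadratic_pos_right {k β : ℝ} (hβ : 1 < β)
    (hq : 0 < β ^ 2 - (k + 1) * β - (k + 1)) :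
    ((k + 1) * β + k) / (β ^ 2 - 1) < (k + 2) / β := by
  rw [div_lt_div_iff₀ (by nlinarith) (by linarith)]
  nlinarith

theorem stmt_12_general (k : ℕ) (m : ℕ) (hm : m = 2 * k + 1) (β : ℝ)
    (hβ1 : ((k : ℝ) + 1 + Real.sqrt ((k : ℝ) ^ 2 + 6 * k + 5)) / 2 < β) :
    ((k : ℝ) * β + ((m : ℝ) - k)) / (β * (β - 1)) <
        (((k : ℝ) + 1) * β + k) / (β ^ 2 - 1) ∧
      (((k : ℝ) + 1) * β + k) / (β ^ 2 - 1) < ((k : ℝ) + 2) / β := by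
  rw [show (k : ℝ) ^ 2 + 6 * k + 5 = ((k : ℝ) + 1) ^ 2 + 4 * ((k : ℝ) + 1) by ring] at hβ1
  obtain ⟨hkβ, hq⟩ := lt_and_quadratic_pos_of_larger_root_lt (by positivity) hβ1
  have hβ : 1 < β := by linarith [(Nat.cast_nonneg k : (0 : ℝ) ≤ k)]
  have hmk : (m : ℝ) - k = k + 1 := by rw [hm]; push_cast; ring
  rw [hmk]
  exact ⟨div_lt_div_of_quadratic_pos_left hβ hq, div_lt_div_of_quadratic_pos_right hβ hq⟩

theorem stmt_12 (k : ℕ) (m : ℕ) (hm : m = 2 * k + 1) (β : ℝ)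
    (hβ1 : ((k : ℝ) + 1 + Real.sqrt ((k : ℝ) ^ 2 + 6 * k + 5)) / 2 < β)
    (hβ2 : β ≤ m + 1) :
    ((k : ℝ) * β + ((m : ℝ) - k)) / (β * (β - 1)) <
        (((k : ℝ) + 1) * β + k) / (β ^ 2 - 1) ∧
      (((k : ℝ) + 1) * β + k) / (β ^ 2 - 1) < ((k : ℝ) + 2) / β :=
  stmt_12_general k m hm β hβ1
end

section
/- Let m = 2k+1 with k ∈ ℕ and β ∈ ((k+1+√(k²+6k+5))/2, m+1]. Then the periodic sequence (k, k+1, k, k+1, ...) is the unique sequence (ε_i) ∈ {0,...,m}^ℕ with Σ ε_i β^{-i} = (kβ + (k+1))/(β² - 1). -/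
/-!
Write `V(δ)` for the value `∑ δ i / β ^ (i + 1)` of a digit sequence with digits in `{0, …, m}`
and `x = V(k, k+1, k, …)`, `y = V(k+1, k, k+1, …)`. Since `β V(δ) = δ 0 + V(δ ∘ succ)` and every
value lies in `[0, m / (β - 1)]`, the first digit of any expansion of a value `v` with
`β v = a + w` is forced to be `a` as soon as `m / (β - 1) - 1 < w < 1`. Here `β x = k + y` and
`β y = k + 1 + x`, and `x + y = m / (β - 1)`, so both windows reduce to `x, y < 1`, which is
`(k + 1) (β + 1) < β ^ 2`, i.e. exactly the lower bound on `β`. Inductively every digit is forced.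
-/

noncomputable def expansionValue (β : ℝ) (ε : ℕ → ℕ) : ℝ := ∑' i, (ε i : ℝ) / β ^ (i + 1)

def alternating (a b : ℕ) (i : ℕ) : ℕ := if Even i then a else b

section Expansion

variable {β : ℝ} {m : ℕ} {ε δ : ℕ → ℕ}

lemma summable_digits_div_pow (hβ : 1 < β) (hε : ∀ i, ε i ≤ m) :
    Summable fun i => (ε i : ℝ) / β ^ (i + 1) := by
  have hgeom : Summable fun i : ℕ => (m / β : ℝ) * (β⁻¹) ^ i :=
    (summable_geometric_of_lt_one (by positivity) (inv_lt_one_of_one_lt₀ hβ)).mul_left _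
  refine hgeom.of_nonneg_of_le (fun i => by positivity) fun i => ?_
  rw [inv_pow, ← div_eq_mul_inv, div_div, ← pow_succ']
  gcongr
  exact_mod_cast hε i

lemma expansionValue_nonneg (hβ : 0 ≤ β) : 0 ≤ expansionValue β ε :=
  tsum_nonneg fun _ => by positivity

lemma expansionValue_le (hβ : 1 < β) (hε : ∀ i, ε i ≤ m) :
    expansionValue β ε ≤ m / (β - 1) := by
  have hgeom := summable_digits_div_pow (ε := fun _ => m) hβ (fun _ => le_rfl)
  calc expansionValue β ε ≤ ∑' i : ℕ, (m : ℝ) / β ^ (i + 1) :=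
        (summable_digits_div_pow hβ hε).tsum_le_tsum
          (fun i => by gcongr; exact_mod_cast hε i) hgeom
    _ = ∑' i : ℕ, (m / β : ℝ) * (β⁻¹) ^ i := by
        congr 1; funext i; rw [inv_pow, ← div_eq_mul_inv, div_div, ← pow_succ']
    _ = m / (β - 1) := by
        have hβ0 : β ≠ 0 := by positivity
        have hβ1 : β - 1 ≠ 0 := by linarith
        rw [tsum_mul_left, tsum_geometric_of_lt_one (by positivity) (inv_lt_one_of_one_lt₀ hβ)]
        field_simp

lemma mul_expansionValue (hβ : β ≠ 0) (hs : Summable fun i => (ε i : ℝ) / β ^ (i + 1)) :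
    β * expansionValue β ε = ε 0 + expansionValue β (fun i => ε (i + 1)) := by
  rw [expansionValue, hs.tsum_eq_zero_add, mul_add, expansionValue, ← tsum_mul_left]
  congr 1
  · rw [zero_add, pow_one]; field_simp
  · congr 1; funext i; rw [pow_succ' β (i + 1)]; field_simp

lemma mul_expansionValue_tail (hβ : 1 < β) (hε : ∀ i, ε i ≤ m) (n : ℕ) :
    β * expansionValue β (fun i => ε (n + i)) = ε n + expansionValue β (fun i => ε (n + 1 + i)) := by
  rw [mul_expansionValue (by positivity) (summable_digits_div_pow hβ fun i => hε (n + i))]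
  simp only [Nat.add_zero, Nat.add_right_comm n 1, Nat.add_assoc]

/-- The digit `ε n` is forced: `ε n - a = w - V(ε (n + 1 + ·))` lies in `(-1, 1)`. -/
lemma digit_eq_of_mul_expansionValue_eq (hβ : 1 < β) (hε : ∀ i, ε i ≤ m) {n a : ℕ} {w : ℝ}
    (hw_gt : m / (β - 1) - 1 < w) (hw_lt : w < 1)
    (h : β * expansionValue β (fun i => ε (n + i)) = a + w) :
    ε n = a ∧ expansionValue β (fun i => ε (n + 1 + i)) = w := by
  have hshift := mul_expansionValue_tail hβ hε n
  have h0 := expansionValue_nonneg (ε := fun i => ε (n + 1 + i)) (by positivity)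
  have h1 := expansionValue_le hβ (fun i => hε (n + 1 + i))
  have hlt : (ε n : ℝ) < a + 1 := by linarith
  have hgt : (a : ℝ) < ε n + 1 := by linarith
  have hdigit : ε n = a := by
    have : ε n < a + 1 := by exact_mod_cast hlt
    have : a < ε n + 1 := by exact_mod_cast hgt
    omega
  refine ⟨hdigit, ?_⟩
  rw [hdigit] at hshift
  linarith

theorem eq_of_expansionValue_eq (hβ : 1 < β) (hε : ∀ i, ε i ≤ m) (hδ : ∀ i, δ i ≤ m)
    (htail : ∀ n, m / (β - 1) - 1 < expansionValue β (fun i => δ (n + 1 + i)) ∧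
      expansionValue β (fun i => δ (n + 1 + i)) < 1)
    (h : expansionValue β ε = expansionValue β δ) : ε = δ := by
  have hstep : ∀ n, expansionValue β (fun i => ε (n + i)) = expansionValue β (fun i => δ (n + i)) →
      ε n = δ n ∧ expansionValue β (fun i => ε (n + 1 + i)) =
        expansionValue β (fun i => δ (n + 1 + i)) := fun n hn =>
    digit_eq_of_mul_expansionValue_eq hβ hε (htail n).1 (htail n).2
      (by rw [hn, mul_expansionValue_tail hβ hδ n])
  have htails : ∀ n, expansionValue β (fun i => ε (n + i)) =
      expansionValue β (fun i => δ (n + i)) := by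
    intro n
    induction n with
    | zero => simpa using h
    | succ n ih => exact (hstep n ih).2
  funext n
  exact (hstep n (htails n)).1

end Expansion

section Alternating

variable {β : ℝ}

lemma alternating_tail (a b n : ℕ) :
    (fun i => alternating a b (n + i)) = if Even n then alternating a b else alternating b a := by
  funext i
  by_cases hn : Even n <;> by_cases hi : Even i <;> simp [alternating, Nat.even_add, hn, hi]

lemma alternating_le_max (a b i : ℕ) : alternating a b i ≤ max a b := by
  unfold alternating; split_ifs <;> omega

lemma expansionValue_alternating (hβ : 1 < β) (a b : ℕ) :
    expansionValue β (alternating a b) = (a * β + b) / (β ^ 2 - 1) := by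
  have hshift : ∀ p q : ℕ, β * expansionValue β (alternating p q) =
      p + expansionValue β (alternating q p) := by
    intro p q
    rw [mul_expansionValue (by positivity)
      (summable_digits_div_pow hβ (alternating_le_max p q))]
    congr 2
    funext i
    by_cases hi : Even i <;> simp [alternating, Nat.even_add_one, hi]
  have hβ2 : β ^ 2 - 1 ≠ 0 := by nlinarith
  rw [eq_div_iff hβ2]
  linear_combination β * hshift a b + hshift b a

lemma expansionValue_alternating_lt_one (hβ : 1 < β) {a b : ℕ} (h : a * β + b + 1 < β ^ 2) :
    expansionValue β (alternating a b) < 1 := by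
  rw [expansionValue_alternating hβ, div_lt_one (by nlinarith)]
  linarith

lemma expansionValue_alternating_add_swap (hβ : 1 < β) (a b : ℕ) :
    expansionValue β (alternating a b) + expansionValue β (alternating b a) = (a + b) / (β - 1) := by
  have hβ1 : β - 1 ≠ 0 := by linarith
  have hβ2 : β ^ 2 - 1 ≠ 0 := by nlinarith
  rw [expansionValue_alternating hβ, expansionValue_alternating hβ]
  field_simp
  ring

end Alternating

lemma mul_add_one_lt_sq_of_lt {c β : ℝ} (h : (c + √(c ^ 2 + 4 * c)) / 2 < β) :
    c * (β + 1) < β ^ 2 := by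
  have hpos : 0 < 2 * β - c := by linarith [Real.sqrt_nonneg (c ^ 2 + 4 * c)]
  have := (Real.sqrt_lt' hpos).1 (by linarith)
  nlinarith

theorem stmt_13_general (k : ℕ) (m : ℕ) (hm : m = 2 * k + 1) (β : ℝ)
    (hβ1 : ((k : ℝ) + 1 + Real.sqrt ((k : ℝ) ^ 2 + 6 * k + 5)) / 2 < β)
    (ε : ℕ → ℕ) (hε : ∀ i, ε i ≤ m) :
    (∑' i : ℕ, (ε i : ℝ) / β ^ (i + 1)) = ((k : ℝ) * β + (k + 1)) / (β ^ 2 - 1) ↔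
      ∀ i, ε i = if Even i then k else k + 1 := by
  subst hm
  have hc : ((k : ℝ) + 1) * (β + 1) < β ^ 2 :=
    mul_add_one_lt_sq_of_lt (by convert hβ1 using 4; ring)
  have hβ : 1 < β := by
    have : 0 < β := by linarith [Real.sqrt_nonneg ((k : ℝ) ^ 2 + 6 * k + 5)]
    nlinarith
  have hx : expansionValue β (alternating k (k + 1)) < 1 :=
    expansionValue_alternating_lt_one hβ (by push_cast; nlinarith)
  have hy : expansionValue β (alternating (k + 1) k) < 1 :=
    expansionValue_alternating_lt_one hβ (by push_cast; nlinarith)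
  have hxy : expansionValue β (alternating k (k + 1)) + expansionValue β (alternating (k + 1) k) =
      ((2 * k + 1 : ℕ) : ℝ) / (β - 1) := by
    rw [expansionValue_alternating_add_swap hβ]; push_cast; ring
  have htail : ∀ n, ((2 * k + 1 : ℕ) : ℝ) / (β - 1) - 1 <
      expansionValue β (fun i => alternating k (k + 1) (n + 1 + i)) ∧
      expansionValue β (fun i => alternating k (k + 1) (n + 1 + i)) < 1 := by
    intro n
    rw [alternating_tail]
    split_ifs <;> constructor <;> linarith
  have hval : expansionValue β (alternating k (k + 1)) = ((k : ℝ) * β + (k + 1)) / (β ^ 2 - 1) := by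
    rw [expansionValue_alternating hβ]; push_cast; ring
  change expansionValue β ε = _ ↔ ∀ i, ε i = alternating k (k + 1) i
  rw [← hval, ← funext_iff]
  refine ⟨eq_of_expansionValue_eq hβ hε (fun i => ?_) htail, fun h => h ▸ rfl⟩
  exact (alternating_le_max k (k + 1) i).trans (by omega)

theorem stmt_13 (k : ℕ) (m : ℕ) (hm : m = 2 * k + 1) (β : ℝ)
    (hβ1 : ((k : ℝ) + 1 + Real.sqrt ((k : ℝ) ^ 2 + 6 * k + 5)) / 2 < β)
    (hβ2 : β ≤ m + 1)
    (ε : ℕ → ℕ) (hε : ∀ i, ε i ≤ m) :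
    (∑' i : ℕ, (ε i : ℝ) / β ^ (i + 1)) = ((k : ℝ) * β + (k + 1)) / (β ^ 2 - 1) ↔
      ∀ i, ε i = if Even i then k else k + 1 :=
  stmt_13_general k m hm β hβ1 ε hε
end

section
/- Let k ∈ ℕ, k ≥ 1, m = 2k, and β the positive root of β² - (k+1)β - k = 0. The only sequence (ε_i) ∈ {0,...,m}^ℕ such that for all i, (ε_i, ε_{i+1}, ...) is lexicographically strictly less than (k+1, k-1)^∞ and lexicographically strictly greater than (k-1, k+1)^∞, is the constant sequence (k)^∞. -/
/-- Strict lexicographic order on sequences of naturals. -/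
def LexLt (x y : ℕ → ℕ) : Prop :=
  ∃ n : ℕ, (∀ i < n, x i = y i) ∧ x n < y n

/-!
Write `u = (k+1, k-1)^∞` and `l = (k-1, k+1)^∞`; each is the shift of the other. If
`σ^j ε < u` with a strict first difference after position `0`, then `ε j = k + 1` and dropping
that common head gives `σ^(j+1) ε < σ u = l`, against `l < σ^(j+1) ε`. Hence `ε j < k + 1`, and
symmetrically `k - 1 < ε j`.
-/

theorem LexLt.asymm {x y : ℕ → ℕ} (hxy : LexLt x y) : ¬ LexLt y x := by
  rintro ⟨n', heq', hlt'⟩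
  obtain ⟨n, heq, hlt⟩ := hxy
  rcases lt_trichotomy n n' with h | rfl | h
  · exact (heq' n h).not_gt hlt
  · exact hlt.asymm hlt'
  · exact (heq n' h).not_gt hlt'

theorem LexLt.tail {x y : ℕ → ℕ} (h : LexLt x y) (hhead : x 0 = y 0) :
    LexLt (fun i => x (i + 1)) (fun i => y (i + 1)) := by
  obtain ⟨n, heq, hlt⟩ := h
  obtain ⟨n, rfl⟩ := Nat.exists_eq_add_one_of_ne_zero (fun hn : n = 0 => by
    subst hn; exact hlt.ne hhead)
  exact ⟨n, fun i hi => heq (i + 1) (by omega), hlt⟩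

theorem LexLt.head_lt {x y : ℕ → ℕ} (h : LexLt x y)
    (htail : LexLt (fun i => y (i + 1)) (fun i => x (i + 1))) : x 0 < y 0 := by
  obtain ⟨n, heq, hlt⟩ := h
  rcases Nat.eq_zero_or_pos n with rfl | hn
  · exact hlt
  · exact absurd htail (LexLt.asymm (LexLt.tail ⟨n, heq, hlt⟩ (heq 0 hn)))

theorem stmt_17_general (k : ℕ)
    (ε : ℕ → ℕ)
    (hupper : ∀ j : ℕ, LexLt (fun i => ε (j + i)) (fun i => if Even i then k + 1 else k - 1))
    (hlower : ∀ j : ℕ, LexLt (fun i => if Even i then k - 1 else k + 1) (fun i => ε (j + i))) :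
    ∀ i, ε i = k := by
  set u : ℕ → ℕ := fun i => if Even i then k + 1 else k - 1
  set l : ℕ → ℕ := fun i => if Even i then k - 1 else k + 1
  have hu_tail : (fun i => u (i + 1)) = l := by
    funext i; by_cases h : Even i <;> simp [u, l, h, Nat.even_add_one]
  have hl_tail : (fun i => l (i + 1)) = u := by
    funext i; by_cases h : Even i <;> simp [u, l, h, Nat.even_add_one]
  intro j
  have hε_tail : (fun i => ε (j + (i + 1))) = fun i => ε (j + 1 + i) := by
    funext i; rw [Nat.add_right_comm, Nat.add_assoc]
  have hlt : ε j < k + 1 := by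
    simpa [u] using (hupper j).head_lt (by rw [hu_tail, hε_tail]; exact hlower (j + 1))
  have hgt : k - 1 < ε j := by
    simpa [l] using (hlower j).head_lt (by rw [hl_tail, hε_tail]; exact hupper (j + 1))
  omega

theorem stmt_17 (k : ℕ) (hk : 1 ≤ k) (m : ℕ) (hm : m = 2 * k)
    (ε : ℕ → ℕ) (hε : ∀ i, ε i ≤ m)
    (hupper : ∀ j : ℕ, LexLt (fun i => ε (j + i)) (fun i => if Even i then k + 1 else k - 1))
    (hlower : ∀ j : ℕ, LexLt (fun i => if Even i then k - 1 else k + 1) (fun i => ε (j + i))) :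
    ∀ i, ε i = k :=
  stmt_17_general k ε hupper hlower
end

section
/- Let k ∈ ℕ, k ≥ 1, m = 2k+1. If (ε_i) ∈ {0,...,m}^ℕ satisfies, for all i, (ε_i, ε_{i+1}, ...) < (k+1, k+1, k, k)^∞ and (ε_i, ε_{i+1}, ...) > (k, k, k+1, k+1)^∞ in the lexicographic order, then (ε_i) equals (k, k+1)^∞ or (k+1, k)^∞. -/
namespace LexLt

variable {x y : ℕ → ℕ}

theorem asymm_s18 (h : LexLt x y) : ¬ LexLt y x :=
  lt_asymm (α := Lex (ℕ → ℕ)) h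

theorem apply_zero_le (h : LexLt x y) : x 0 ≤ y 0 :=
  Pi.apply_le_of_toLex (show toLex x < toLex y from h).le (by simp)

theorem reflect {c : ℕ} (hy : ∀ i, y i ≤ c) (h : LexLt x y) :
    LexLt (fun i => c - y i) (fun i => c - x i) := by
  obtain ⟨n, hagree, hlt⟩ := h
  exact ⟨n, fun i hi => by simp only [hagree i hi], by have := hy n; dsimp only; omega⟩

end LexLt

-- the periodic word `(a, a, b, b)^∞`
def blockWord (a b : ℕ) (i : ℕ) : ℕ :=
  if i % 4 = 0 ∨ i % 4 = 1 then a else b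

theorem blockWord_add_two (a b i : ℕ) : blockWord a b (i + 2) = blockWord b a i := by
  unfold blockWord
  split_ifs <;> omega

theorem blockWord_reflect {a b c : ℕ} (h : a + b = c) :
    (fun i => c - blockWord a b i) = blockWord b a := by
  funext i
  unfold blockWord
  split_ifs <;> omega

def IsAdmissible (k : ℕ) (ε : ℕ → ℕ) : Prop :=
  ∀ j, LexLt (fun i => ε (j + i)) (blockWord (k + 1) k) ∧
    LexLt (blockWord k (k + 1)) (fun i => ε (j + i))

namespace IsAdmissible

variable {k : ℕ} {ε : ℕ → ℕ}

theorem le_apply (h : IsAdmissible k ε) (i : ℕ) : k ≤ ε i := by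
  simpa [blockWord] using (h i).2.apply_zero_le

theorem apply_le (h : IsAdmissible k ε) (i : ℕ) : ε i ≤ k + 1 := by
  simpa [blockWord] using (h i).1.apply_zero_le

theorem apply_eq_or (h : IsAdmissible k ε) (i : ℕ) : ε i = k ∨ ε i = k + 1 := by
  have := h.le_apply i
  have := h.apply_le i
  omega

theorem reflect (h : IsAdmissible k ε) : IsAdmissible k (fun i => 2 * k + 1 - ε i) := by
  intro j
  constructor
  · rw [← blockWord_reflect (a := k) (b := k + 1) (c := 2 * k + 1) (by omega)]
    exact (h j).2.reflect fun i => by have := h.apply_le (j + i); omega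
  · rw [← blockWord_reflect (a := k + 1) (b := k) (c := 2 * k + 1) (by omega)]
    exact (h j).1.reflect fun i => by unfold blockWord; split_ifs <;> omega

theorem not_low_low (h : IsAdmissible k ε) (j : ℕ) : ¬ (ε j = k ∧ ε (j + 1) = k) := by
  rintro ⟨h₀, h₁⟩
  obtain ⟨n, hagree, hlt⟩ : ∃ n, (∀ i < n, blockWord k (k + 1) i = ε (j + i)) ∧
      blockWord k (k + 1) n < ε (j + n) := (h j).2
  have hn : n % 4 = 0 ∨ n % 4 = 1 := by
    by_contra hn
    have := h.apply_le (j + n)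
    simp only [blockWord, if_neg hn] at hlt
    omega
  have hnk : blockWord k (k + 1) n = k := if_pos hn
  have hn₀ : n ≠ 0 := by rintro rfl; simp_all
  have hn₁ : n ≠ 1 := by rintro rfl; simp_all
  refine (h (j + 2)).1.asymm_s18 ⟨n - 2, fun i hi => ?_, ?_⟩
  · show blockWord (k + 1) k i = ε (j + 2 + i)
    rw [← blockWord_add_two, show j + 2 + i = j + (i + 2) by omega]
    exact hagree (i + 2) (by omega)
  · show blockWord (k + 1) k (n - 2) < ε (j + 2 + (n - 2))
    rwa [← blockWord_add_two, show n - 2 + 2 = n by omega, show j + 2 + (n - 2) = j + n by omega]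

theorem apply_succ (h : IsAdmissible k ε) (j : ℕ) : ε (j + 1) = 2 * k + 1 - ε j := by
  have := h.not_low_low j
  have := h.reflect.not_low_low j
  have := h.apply_eq_or j
  have := h.apply_eq_or (j + 1)
  omega

theorem periodic (h : IsAdmissible k ε) : Function.Periodic ε 2 := fun j => by
  rw [h.apply_succ, h.apply_succ]
  have := h.apply_le j
  omega

end IsAdmissible

theorem Function.Periodic.eq_ite_even {α : Type*} {f : ℕ → α} (hf : Function.Periodic f 2)
    (i : ℕ) : f i = if Even i then f 0 else f 1 := by
  rw [← hf.map_mod_nat i]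
  rcases Nat.even_or_odd i with he | ho
  · rw [if_pos he, Nat.even_iff.mp he]
  · rw [if_neg (Nat.not_even_iff_odd.mpr ho), Nat.odd_iff.mp ho]

theorem stmt_18_general (k : ℕ)
    (ε : ℕ → ℕ)
    (hupper : ∀ j : ℕ, LexLt (fun i => ε (j + i))
      (fun i => if i % 4 = 0 ∨ i % 4 = 1 then k + 1 else k))
    (hlower : ∀ j : ℕ, LexLt (fun i => if i % 4 = 0 ∨ i % 4 = 1 then k else k + 1)
      (fun i => ε (j + i))) :
    (∀ i, ε i = if Even i then k else k + 1) ∨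
      (∀ i, ε i = if Even i then k + 1 else k) := by
  have h : IsAdmissible k ε := fun j => ⟨hupper j, hlower j⟩
  refine (h.apply_eq_or 0).imp (fun h₀ i => ?_) (fun h₀ i => ?_) <;>
  · rw [h.periodic.eq_ite_even i, h.apply_succ 0, h₀]
    congr 1
    omega

theorem stmt_18 (k : ℕ) (hk : 1 ≤ k) (m : ℕ) (hm : m = 2 * k + 1)
    (ε : ℕ → ℕ) (hε : ∀ i, ε i ≤ m)
    (hupper : ∀ j : ℕ, LexLt (fun i => ε (j + i))
      (fun i => if i % 4 = 0 ∨ i % 4 = 1 then k + 1 else k))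
    (hlower : ∀ j : ℕ, LexLt (fun i => if i % 4 = 0 ∨ i % 4 = 1 then k else k + 1)
      (fun i => ε (j + i))) :
    (∀ i, ε i = if Even i then k else k + 1) ∨
      (∀ i, ε i = if Even i then k + 1 else k) :=
  stmt_18_general k ε hupper hlower
end
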